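/- arXiv:1802.05180 — 2 statements merged into one kernel-verified Lean document; each statement's English description precedes it below -/
import Mathlib

section
/- Let q = q₁q₂ with q₁, q₂ coprime positive integers, and let χ₁, χ₂ be Dirichlet characters modulo q₁ and q₂ respectively, with χ = χ₁χ₂ the character modulo q they induce. Define K_χ(m) = q^{-1/2} · Σ_{u mod q, (u,q)=1} χ(1+u)·conj(χ)(u)·e(mu/q). Then K_χ(m) = K_{χ₁}(q₂*·m) · K_{χ₂}(q₁*·m), where q₂* is an inverse of q₂ modulo q₁ and q₁* is an inverse of q₁ modulo q₂ (twisted multiplicativity). -/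
open Finset

/-- `e(x) = exp(2πix)` -/
noncomputable def e (x : ℂ) : ℂ := Complex.exp (2 * Real.pi * Complex.I * x)

/-- The sum `K_χ(m)` attached to a Dirichlet character mod `n`, where the sum
runs over units `u` of `ZMod n`. -/
noncomputable def K (n : ℕ) [NeZero n] (χ : DirichletCharacter ℂ n) (m : ZMod n) : ℂ :=
  (n : ℂ) ^ (-(1:ℂ)/2) *
    ∑ u ∈ Finset.univ.filter (fun u : ZMod n => IsUnit u),
      χ (1 + u) * (starRingEnd ℂ) (χ u) * e ((m.val * u.val : ℂ) / n)

lemma e_add (x y : ℂ) : e (x + y) = e x * e y := by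
  simp [e, mul_add, Complex.exp_add]

lemma e_int (k : ℤ) : e (k : ℂ) = 1 := by
  rw [e, show (2 * Real.pi * Complex.I * k : ℂ) = k * (2 * Real.pi * Complex.I) by ring]
  exact Complex.exp_int_mul_two_pi_mul_I k

lemma isUnit_prod_iff {M N : Type*} [CommMonoid M] [CommMonoid N] (x : M × N) :
    IsUnit x ↔ IsUnit x.1 ∧ IsUnit x.2 := by
  constructor
  · intro h
    exact ⟨h.map (MonoidHom.fst M N), h.map (MonoidHom.snd M N)⟩
  · obtain ⟨x₁, x₂⟩ := x
    rintro ⟨⟨a, ha⟩, ⟨b, hb⟩⟩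
    rw [isUnit_iff_exists_inv]
    simp only at ha hb
    exact ⟨(↑a⁻¹, ↑b⁻¹), by rw [← ha, ← hb]; exact Prod.ext (by simp) (by simp)⟩

lemma frac_split (A B C D E F q₁ q₂ : ℕ) (k : ℤ) (hq₁ : (q₁:ℂ) ≠ 0) (hq₂ : (q₂:ℂ) ≠ 0)
    (hk : (A*B:ℤ) - C*D*q₂ - E*F*q₁ = (q₁*q₂ : ℕ) * k) :
    ((A:ℂ)*B)/((q₁*q₂:ℕ):ℂ) = (C:ℂ)*D/q₁ + (E:ℂ)*F/q₂ + (k:ℂ) := by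
  have hC : (A:ℂ)*B - (C:ℂ)*D*q₂ - (E:ℂ)*F*q₁ = (q₁:ℂ)*q₂*k := by
    exact_mod_cast congrArg (fun z : ℤ => (z : ℂ)) hk
  push_cast
  field_simp
  linear_combination hC

/-- mod-`d` vanishing of the key difference. -/
lemma key_zmod (N d c : ℕ) [NeZero N] [NeZero d] (hdvd : d ∣ N) (s : ZMod d)
    (hs : (c : ZMod d) * s = 1) (m : ℤ) (u : ZMod N) (E : ℤ) (hE : ((E : ℤ) : ZMod d) = 0) :
    ((((m : ZMod N).val * u.val : ℤ)
      - (s * (m : ZMod d)).val * (ZMod.castHom hdvd (ZMod d) u).val * c - E : ℤ) : ZMod d) = 0 := by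
  set v := (ZMod.castHom hdvd (ZMod d) u : ZMod d) with hvdef
  have hu : ((u.val : ℤ) : ZMod d) = v := by
    rw [Int.cast_natCast, ZMod.natCast_val, hvdef, ZMod.castHom_apply]
  have hm : (((m : ZMod N).val : ℤ) : ZMod d) = (m : ZMod d) := by
    rw [Int.cast_natCast, ZMod.natCast_val, ← ZMod.castHom_apply (h := hdvd), map_intCast]
  have hm1 : (((s * (m : ZMod d)).val : ℤ) : ZMod d) = s * (m : ZMod d) := by
    rw [Int.cast_natCast, ZMod.natCast_val, ZMod.cast_id]
  have hv : ((v.val : ℤ) : ZMod d) = v := by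
    rw [Int.cast_natCast, ZMod.natCast_val, ZMod.cast_id]
  rw [Int.cast_sub, Int.cast_sub, Int.cast_mul, Int.cast_mul, Int.cast_mul, hu, hm, hm1, hv,
    Int.cast_natCast, hE]
  calc (m : ZMod d) * v - s * (m : ZMod d) * v * c - 0
      = (m : ZMod d) * v * (1 - c * s) := by ring
    _ = 0 := by rw [hs]; ring

/-- Twisted multiplicativity of `K_χ`. -/
theorem stmt3 (q₁ q₂ : ℕ) (hq₁ : 0 < q₁) (hq₂ : 0 < q₂) (hco : Nat.Coprime q₁ q₂)
    [NeZero q₁] [NeZero q₂] [NeZero (q₁ * q₂)]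
    (χ₁ : DirichletCharacter ℂ q₁) (χ₂ : DirichletCharacter ℂ q₂)
    (χ : DirichletCharacter ℂ (q₁ * q₂))
    (hχ : ∀ u : ZMod (q₁ * q₂),
      χ u = χ₁ (ZMod.castHom (dvd_mul_right q₁ q₂) (ZMod q₁) u) *
            χ₂ (ZMod.castHom (dvd_mul_left q₂ q₁) (ZMod q₂) u))
    (s₂ : ZMod q₁) (hs₂ : (q₂ : ZMod q₁) * s₂ = 1)
    (s₁ : ZMod q₂) (hs₁ : (q₁ : ZMod q₂) * s₁ = 1)
    (m : ℤ) :
    K (q₁ * q₂) χ (m : ZMod (q₁ * q₂)) =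
      K q₁ χ₁ (s₂ * (m : ZMod q₁)) * K q₂ χ₂ (s₁ * (m : ZMod q₂)) := by
  set π₁ := ZMod.castHom (dvd_mul_right q₁ q₂) (ZMod q₁) with hπ₁
  set π₂ := ZMod.castHom (dvd_mul_left q₂ q₁) (ZMod q₂) with hπ₂
  -- the CRT equivalence
  have hCRT : ∀ u : ZMod (q₁ * q₂), (ZMod.chineseRemainder hco) u = (π₁ u, π₂ u) := by
    intro u
    have h1 : ((ZMod.chineseRemainder hco) u).1 = π₁ u := by
      simp [ZMod.chineseRemainder, ZMod.castHom_apply, Prod.fst_zmod_cast, hπ₁]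
    have h2 : ((ZMod.chineseRemainder hco) u).2 = π₂ u := by
      simp [ZMod.chineseRemainder, ZMod.castHom_apply, Prod.snd_zmod_cast, hπ₂]
    rw [← h1, ← h2]
  -- term-by-term identity
  have key : ∀ u : ZMod (q₁ * q₂), IsUnit u →
      χ (1 + u) * (starRingEnd ℂ) (χ u) *
        e ((((m : ZMod (q₁ * q₂)).val : ℂ) * u.val) / (q₁ * q₂ : ℕ)) =
      (χ₁ (1 + π₁ u) * (starRingEnd ℂ) (χ₁ (π₁ u)) *
        e ((((s₂ * (m : ZMod q₁)).val : ℂ) * (π₁ u).val) / q₁)) *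
      (χ₂ (1 + π₂ u) * (starRingEnd ℂ) (χ₂ (π₂ u)) *
        e ((((s₁ * (m : ZMod q₂)).val : ℂ) * (π₂ u).val) / q₂)) := by
    intro u _
    have hD₁ : (q₁ : ℤ) ∣ (((m : ZMod (q₁*q₂)).val * u.val : ℤ)
        - (s₂ * (m : ZMod q₁)).val * (π₁ u).val * q₂
        - (s₁ * (m : ZMod q₂)).val * (π₂ u).val * q₁) := by
      rw [← ZMod.intCast_zmod_eq_zero_iff_dvd]
      exact key_zmod (q₁*q₂) q₁ q₂ (dvd_mul_right q₁ q₂) s₂ hs₂ m u _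
        (by push_cast [ZMod.natCast_self]; ring)
    have hD₂ : (q₂ : ℤ) ∣ (((m : ZMod (q₁*q₂)).val * u.val : ℤ)
        - (s₂ * (m : ZMod q₁)).val * (π₁ u).val * q₂
        - (s₁ * (m : ZMod q₂)).val * (π₂ u).val * q₁) := by
      rw [← ZMod.intCast_zmod_eq_zero_iff_dvd]
      have := key_zmod (q₁*q₂) q₂ q₁ (dvd_mul_left q₂ q₁) s₁ hs₁ m u
        ((s₂ * (m : ZMod q₁)).val * (π₁ u).val * q₂)
        (by push_cast [ZMod.natCast_self]; ring)
      rw [← this]; congr 1; ring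
    have hDq : ((q₁ * q₂ : ℕ) : ℤ) ∣ (((m : ZMod (q₁*q₂)).val * u.val : ℤ)
        - (s₂ * (m : ZMod q₁)).val * (π₁ u).val * q₂
        - (s₁ * (m : ZMod q₂)).val * (π₂ u).val * q₁) := by
      push_cast
      exact (Nat.isCoprime_iff_coprime.mpr hco).mul_dvd hD₁ hD₂
    obtain ⟨k, hk⟩ := hDq
    -- complex identity for the exponential arguments
    have hq₁C : (q₁ : ℂ) ≠ 0 := Nat.cast_ne_zero.mpr hq₁.ne'
    have hq₂C : (q₂ : ℂ) ≠ 0 := Nat.cast_ne_zero.mpr hq₂.ne'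
    have hkC : ((((m : ZMod (q₁ * q₂)).val : ℂ) * u.val) / (q₁ * q₂ : ℕ)) =
        ((((s₂ * (m : ZMod q₁)).val : ℂ) * (π₁ u).val) / q₁) +
        ((((s₁ * (m : ZMod q₂)).val : ℂ) * (π₂ u).val) / q₂) + (k : ℤ) := by
      exact frac_split _ _ _ _ _ _ q₁ q₂ k hq₁C hq₂C (by push_cast at hk ⊢; linarith [hk])
    have he : e ((((m : ZMod (q₁ * q₂)).val : ℂ) * u.val) / (q₁ * q₂ : ℕ)) =
        e ((((s₂ * (m : ZMod q₁)).val : ℂ) * (π₁ u).val) / q₁) *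
        e ((((s₁ * (m : ZMod q₂)).val : ℂ) * (π₂ u).val) / q₂) := by
      rw [hkC, e_add, e_add, e_int, mul_one]
    have hχ1 : χ (1 + u) = χ₁ (1 + π₁ u) * χ₂ (1 + π₂ u) := by
      rw [hχ (1 + u), show π₁ (1 + u) = 1 + π₁ u by rw [map_add, map_one],
        show π₂ (1 + u) = 1 + π₂ u by rw [map_add, map_one]]
    have hχ2 : (starRingEnd ℂ) (χ u) =
        (starRingEnd ℂ) (χ₁ (π₁ u)) * (starRingEnd ℂ) (χ₂ (π₂ u)) := by
      rw [hχ u, map_mul]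
    rw [hχ1, hχ2, he]; ring
  -- split the sum via CRT
  have hsum : ∑ u ∈ Finset.univ.filter (fun u : ZMod (q₁ * q₂) => IsUnit u),
      χ (1 + u) * (starRingEnd ℂ) (χ u) *
        e ((((m : ZMod (q₁ * q₂)).val : ℂ) * u.val) / (q₁ * q₂ : ℕ)) =
      (∑ u₁ ∈ Finset.univ.filter (fun u : ZMod q₁ => IsUnit u),
        χ₁ (1 + u₁) * (starRingEnd ℂ) (χ₁ u₁) *
          e ((((s₂ * (m : ZMod q₁)).val : ℂ) * u₁.val) / q₁)) *
      (∑ u₂ ∈ Finset.univ.filter (fun u : ZMod q₂ => IsUnit u),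
        χ₂ (1 + u₂) * (starRingEnd ℂ) (χ₂ u₂) *
          e ((((s₁ * (m : ZMod q₂)).val : ℂ) * u₂.val) / q₂)) := by
    rw [Finset.sum_mul_sum, ← Finset.sum_product']
    refine Finset.sum_nbij' (fun u => (π₁ u, π₂ u))
      (fun p => (ZMod.chineseRemainder hco).symm p) ?_ ?_ ?_ ?_ ?_
    · intro u hu
      rw [Finset.mem_filter] at hu
      rw [Finset.mem_product, Finset.mem_filter, Finset.mem_filter]
      exact ⟨⟨Finset.mem_univ _, hu.2.map π₁⟩, ⟨Finset.mem_univ _, hu.2.map π₂⟩⟩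
    · intro p hp
      rw [Finset.mem_product, Finset.mem_filter, Finset.mem_filter] at hp
      rw [Finset.mem_filter]
      refine ⟨Finset.mem_univ _, ?_⟩
      have : IsUnit p := (isUnit_prod_iff p).mpr ⟨hp.1.2, hp.2.2⟩
      exact this.map (ZMod.chineseRemainder hco).symm.toRingHom
    · intro u _
      rw [← hCRT]
      exact (ZMod.chineseRemainder hco).symm_apply_apply u
    · intro p _
      rw [← hCRT]
      exact (ZMod.chineseRemainder hco).apply_symm_apply p
    · intro u hu
      rw [Finset.mem_filter] at hu
      exact key u hu.2
  -- assemble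
  have hpre : ((q₁ * q₂ : ℕ) : ℂ) ^ (-(1:ℂ)/2) =
      (q₁ : ℂ) ^ (-(1:ℂ)/2) * (q₂ : ℂ) ^ (-(1:ℂ)/2) := by
    have := Complex.mul_cpow_ofReal_nonneg (Nat.cast_nonneg q₁) (Nat.cast_nonneg q₂) (-(1:ℂ)/2)
    push_cast at this ⊢
    exact this
  rw [K, K, K, hsum, hpre]
  ring
end

section
/- Abstract Polya–Vinogradov completion lemma: Let q ≥ 2 and let F : Z/qZ → ℂ be a function whose Fourier coefficients F̂(t) = Σ_{u mod q} F(u)·e(-tu/q) satisfy |F̂(0)| ≤ A and |F̂(t)| ≤ B·gcd(t,q)^{1/2} for all t ≢ 0 mod q. Then for every M ≥ 1, |Σ_{1 ≤ m ≤ M} F(m)| ≤ A·M/q + C·B·d(q)·log(2q) for an absolute constant C, where d(q) is the divisor function. -/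
/-!
Finite Fourier inversion writes `q · ∑_{m ≤ M} F(m)` as `∑_t F̂(t) G(t)`, where
`G(t) = ∑_{m ≤ M} e(tm/q)`. The term `t = 0` contributes `F̂(0) · M`; for `0 < t < q`, `G(t)` is a
geometric sum bounded by `1 / sin(πt/q) ≤ q/(2t) + q/(2(q-t))`. After reflecting `t ↦ q - t`, what
remains is `q ∑_{t<q} gcd(t,q)^{1/2}/t`; writing `t = g s` with `g = gcd(t,q)` bounds each term by
`1/s`, so the sum is at most `d(q)` harmonic sums.
-/

open Finset

open Real ZMod

lemma sum_range_eq_sum_zmod {M : Type*} [AddCommMonoid M] (q : ℕ) [NeZero q] (f : ZMod q → M) :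
    ∑ u ∈ range q, f u = ∑ j : ZMod q, f j :=
  sum_nbij' (↑) ZMod.val (by simp) (fun j _ => by simp [ZMod.val_lt])
    (fun u hu => ZMod.val_cast_of_lt (mem_range.mp hu)) (fun j _ => by simp) (fun _ _ => rfl)

lemma stdAddChar_intCast_eq_e (q : ℕ) [NeZero q] (j : ℤ) :
    (stdAddChar (j : ZMod q) : ℂ) = e (j / q) := by
  rw [stdAddChar_coe, e, mul_div_assoc]

lemma dft_natCast_eq_sum_range (q : ℕ) [NeZero q] (F : ZMod q → ℂ) (t : ℕ) :
    𝓕 F t = ∑ u ∈ range q, F u * e (-((t * u : ℂ) / q)) := by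
  rw [dft_apply, ← sum_range_eq_sum_zmod]
  refine sum_congr rfl fun u _ => ?_
  have := stdAddChar_intCast_eq_e q (-(t * u : ℤ))
  push_cast at this
  rw [smul_eq_mul, mul_comm, mul_comm (u : ZMod q), this, neg_div]

lemma natCast_mul_eq_sum_dft_mul_e (q : ℕ) [NeZero q] (F : ZMod q → ℂ) (m : ℕ) :
    (q : ℂ) * F m = ∑ t ∈ range q, 𝓕 F t * e (t * m / q) := by
  conv_lhs => rw [← dft.symm_apply_apply F, invDFT_apply, smul_eq_mul,
    mul_inv_cancel_left₀ (NeZero.ne (q : ℂ))]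
  rw [← sum_range_eq_sum_zmod]
  refine sum_congr rfl fun t _ => ?_
  have := stdAddChar_intCast_eq_e q (t * m : ℤ)
  push_cast at this
  rw [smul_eq_mul, mul_comm, this]

lemma natCast_mul_sum_eq_sum_dft_mul (q : ℕ) [NeZero q] (F : ZMod q → ℂ) (s : Finset ℕ) :
    (q : ℂ) * ∑ m ∈ s, F m = ∑ t ∈ range q, 𝓕 F t * ∑ m ∈ s, e (t * m / q) := by
  simp only [mul_sum, natCast_mul_eq_sum_dft_mul_e]
  exact sum_comm

lemma e_ofReal (x : ℝ) : e x = Complex.exp ((2 * π * x : ℝ) * Complex.I) := by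
  rw [e]; push_cast; ring_nf

lemma norm_e_ofReal (x : ℝ) : ‖e x‖ = 1 := by
  rw [e_ofReal, Complex.norm_exp_ofReal_mul_I]

lemma norm_e_ofReal_sub_one (x : ℝ) : ‖e x - 1‖ = 2 * |sin (π * x)| := by
  have h := Complex.norm_exp_I_mul_ofReal_sub_one (2 * π * x)
  rwa [show 2 * π * x / 2 = π * x by ring, norm_mul, Real.norm_two, Real.norm_eq_abs,
    mul_comm Complex.I, ← e_ofReal] at h

lemma e_natCast_mul (n : ℕ) (x : ℂ) : e (n * x) = e x ^ n := by
  rw [e, e, ← Complex.exp_nat_mul]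
  ring_nf

lemma norm_sum_Icc_pow_le {w : ℂ} (hw : ‖w‖ = 1) (hw1 : w ≠ 1) (M : ℕ) :
    ‖∑ m ∈ Icc 1 M, w ^ m‖ ≤ 2 / ‖w - 1‖ := by
  rw [← Ico_add_one_right_eq_Icc, geom_sum_Ico hw1 (Nat.le_add_left 1 M), norm_div]
  gcongr
  calc ‖w ^ (M + 1) - w ^ 1‖ ≤ ‖w ^ (M + 1)‖ + ‖w ^ 1‖ := norm_sub_le _ _
    _ = 2 := by rw [norm_pow, norm_pow, hw]; norm_num

lemma two_mul_le_sin_pi_mul {x : ℝ} (hx0 : 0 ≤ x) (hx : x ≤ 1 / 2) : 2 * x ≤ sin (π * x) := by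
  have h := mul_le_sin (x := π * x) (by positivity) (by nlinarith [pi_pos])
  rwa [← mul_assoc, div_mul_cancel₀ _ pi_ne_zero] at h

lemma one_div_sin_pi_mul_le {x : ℝ} (hx0 : 0 < x) (hx1 : x < 1) :
    1 / sin (π * x) ≤ 1 / (2 * x) + 1 / (2 * (1 - x)) := by
  have hx1' : 0 < 1 - x := by linarith
  rcases le_total x (1 / 2) with hx | hx
  · have := two_mul_le_sin_pi_mul hx0.le hx
    calc 1 / sin (π * x) ≤ 1 / (2 * x) := by gcongr
      _ ≤ _ := le_add_of_nonneg_right (by positivity)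
  · have := two_mul_le_sin_pi_mul hx1'.le (by linarith)
    rw [mul_one_sub π, sin_pi_sub] at this
    calc 1 / sin (π * x) ≤ 1 / (2 * (1 - x)) := by gcongr
      _ ≤ _ := le_add_of_nonneg_left (by positivity)

lemma norm_sum_Icc_e_mul_le {x : ℝ} (hx0 : 0 < x) (hx1 : x < 1) (M : ℕ) :
    ‖∑ m ∈ Icc 1 M, e (m * x)‖ ≤ 1 / (2 * x) + 1 / (2 * (1 - x)) := by
  have hsin : 0 < sin (π * x) := sin_pos_of_pos_of_lt_pi (by positivity) (by nlinarith [pi_pos])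
  have hnorm : ‖e x - 1‖ = 2 * sin (π * x) := by rw [norm_e_ofReal_sub_one, abs_of_pos hsin]
  have hne : e x ≠ 1 := fun h => by rw [h, sub_self, norm_zero] at hnorm; linarith
  simp only [e_natCast_mul]
  calc ‖∑ m ∈ Icc 1 M, e x ^ m‖ ≤ 2 / ‖e x - 1‖ := norm_sum_Icc_pow_le (norm_e_ofReal x) hne M
    _ = 1 / sin (π * x) := by rw [hnorm]; field_simp
    _ ≤ _ := one_div_sin_pi_mul_le hx0 hx1

lemma norm_sum_Icc_e_natCast_mul_div_le (M : ℕ) {t q : ℕ} (ht : 0 < t) (htq : t < q) :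
    ‖∑ m ∈ Icc 1 M, e (t * m / q)‖ ≤ 1 / (2 * (t / q : ℝ)) + 1 / (2 * (1 - t / q : ℝ)) := by
  have hq : (0 : ℝ) < q := by exact_mod_cast ht.trans htq
  have hx0 : (0 : ℝ) < t / q := div_pos (by exact_mod_cast ht) hq
  have hx1 : (t / q : ℝ) < 1 := (div_lt_one hq).mpr (by exact_mod_cast htq)
  convert norm_sum_Icc_e_mul_le hx0 hx1 M using 4 with m
  push_cast
  ring

lemma sum_Ico_sqrt_gcd_div_sub (q : ℕ) :
    ∑ t ∈ Ico 1 q, √(t.gcd q) / ((q : ℝ) - t) = ∑ t ∈ Ico 1 q, √(t.gcd q) / t := by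
  have h := sum_Ico_reflect (fun t => √(t.gcd q) / t) 1 (Nat.le_succ q)
  rw [Nat.add_sub_cancel, Nat.add_sub_cancel_left] at h
  rw [← h]
  refine sum_congr rfl fun t ht => ?_
  have htq : t ≤ q := (mem_Ico.mp ht).2.le
  rw [Nat.gcd_self_sub_left htq, Nat.cast_sub htq]

lemma sum_Ico_sqrt_gcd_mul_one_div_add_one_div_eq (q : ℕ) :
    ∑ t ∈ Ico 1 q, √(t.gcd q) * (1 / (2 * (t / q : ℝ)) + 1 / (2 * (1 - t / q : ℝ))) =
      q * ∑ t ∈ Ico 1 q, √(t.gcd q) / t := by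
  have hpoint : ∀ t ∈ Ico 1 q, √(t.gcd q) * (1 / (2 * (t / q : ℝ)) + 1 / (2 * (1 - t / q : ℝ))) =
      q / 2 * (√(t.gcd q) / t + √(t.gcd q) / ((q : ℝ) - t)) := by
    intro t ht
    obtain ⟨ht1, htq⟩ := mem_Ico.mp ht
    have ht0 : (0 : ℝ) < t := by exact_mod_cast ht1
    have hq : (0 : ℝ) < q := ht0.trans (by exact_mod_cast htq)
    rw [one_sub_div hq.ne']
    field_simp
  rw [sum_congr rfl hpoint, ← mul_sum, sum_add_distrib, sum_Ico_sqrt_gcd_div_sub]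
  ring

lemma sqrt_gcd_div_le_one_div_div_gcd {t : ℕ} (q : ℕ) (ht : t ≠ 0) :
    √(t.gcd q) / t ≤ 1 / (t / t.gcd q : ℕ) := by
  have hg : 1 ≤ t.gcd q := Nat.gcd_pos_of_pos_left q (Nat.pos_of_ne_zero ht)
  have hs : 1 ≤ t / t.gcd q := Nat.div_pos (Nat.gcd_le_left q (Nat.pos_of_ne_zero ht)) hg
  have hg' : (1 : ℝ) ≤ t.gcd q := by exact_mod_cast hg
  have hts : (t : ℝ) = t.gcd q * (t / t.gcd q : ℕ) := by
    exact_mod_cast (Nat.mul_div_cancel' (Nat.gcd_dvd_left t q)).symm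
  rw [hts, div_le_div_iff₀ (by positivity) (by positivity), one_mul]
  gcongr
  exact Real.sqrt_le_self_iff.mpr (Or.inr hg')

lemma sum_Icc_sqrt_gcd_div_le {q : ℕ} (hq : q ≠ 0) (N : ℕ) :
    ∑ t ∈ Icc 1 N, √(t.gcd q) / t ≤ #q.divisors * (1 + log N) := by
  let split : ℕ → ℕ × ℕ := fun t => (t.gcd q, t / t.gcd q)
  have hmaps : ∀ t ∈ Icc 1 N, split t ∈ q.divisors ×ˢ Icc 1 N := by
    intro t ht
    obtain ⟨ht1, htN⟩ := mem_Icc.mp ht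
    simp only [split, mem_product, Nat.mem_divisors, mem_Icc]
    exact ⟨⟨Nat.gcd_dvd_right t q, hq⟩,
      Nat.div_pos (Nat.gcd_le_left q ht1) (Nat.gcd_pos_of_pos_left q ht1),
      (Nat.div_le_self t _).trans htN⟩
  have hinj : Set.InjOn split (Icc 1 N) := by
    intro a _ b _ hab
    simp only [split, Prod.mk.injEq] at hab
    rw [← Nat.mul_div_cancel' (Nat.gcd_dvd_left a q), hab.2, hab.1,
      Nat.mul_div_cancel' (Nat.gcd_dvd_left b q)]
  calc ∑ t ∈ Icc 1 N, √(t.gcd q) / t ≤ ∑ t ∈ Icc 1 N, 1 / ((split t).2 : ℝ) :=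
        sum_le_sum fun t ht =>
          sqrt_gcd_div_le_one_div_div_gcd q (Nat.one_le_iff_ne_zero.mp (mem_Icc.mp ht).1)
    _ = ∑ p ∈ (Icc 1 N).image split, 1 / (p.2 : ℝ) :=
        (sum_image (f := fun p : ℕ × ℕ => 1 / (p.2 : ℝ)) hinj).symm
    _ ≤ ∑ p ∈ q.divisors ×ˢ Icc 1 N, 1 / (p.2 : ℝ) :=
        sum_le_sum_of_subset_of_nonneg (image_subset_iff.mpr hmaps) fun _ _ _ => by positivity
    _ = #q.divisors * ∑ s ∈ Icc 1 N, (s : ℝ)⁻¹ := by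
        simp only [sum_product, sum_const, nsmul_eq_mul, one_div]
    _ ≤ #q.divisors * (1 + log N) := by
        gcongr
        simpa [harmonic_eq_sum_Icc] using harmonic_le_one_add_log N

theorem norm_sum_Icc_le_of_norm_dft_le (q : ℕ) [NeZero q] (F : ZMod q → ℂ) {A B : ℝ}
    (hB0 : 0 ≤ B) (hA : ‖𝓕 F 0‖ ≤ A) (hB : ∀ t ∈ Ico 1 q, ‖𝓕 F t‖ ≤ B * √(t.gcd q)) (M : ℕ) :
    ‖∑ m ∈ Icc 1 M, F m‖ ≤ A * M / q + B * #q.divisors * (1 + log q) := by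
  set G : ℕ → ℂ := fun t => ∑ m ∈ Icc 1 M, e (t * m / q)
  have hq : (0 : ℝ) < q := by exact_mod_cast Nat.pos_of_ne_zero (NeZero.ne q)
  have hG0 : ‖G 0‖ = M := by simp [G, e]
  have hsum : ∑ t ∈ Ico 1 q, ‖𝓕 F t * G t‖ ≤ B * (q * (#q.divisors * (1 + log q))) := calc
    ∑ t ∈ Ico 1 q, ‖𝓕 F t * G t‖ ≤
        ∑ t ∈ Ico 1 q, B * √(t.gcd q) * (1 / (2 * (t / q : ℝ)) + 1 / (2 * (1 - t / q : ℝ))) := by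
      refine sum_le_sum fun t ht => ?_
      rw [norm_mul]
      obtain ⟨ht1, htq⟩ := mem_Ico.mp ht
      exact mul_le_mul (hB t ht) (norm_sum_Icc_e_natCast_mul_div_le M ht1 htq) (norm_nonneg _) ((norm_nonneg _).trans (hB t ht))
    _ = B * (q * ∑ t ∈ Ico 1 q, √(t.gcd q) / t) := by
      simp only [mul_assoc, ← mul_sum, sum_Ico_sqrt_gcd_mul_one_div_add_one_div_eq]
    _ ≤ B * (q * (#q.divisors * (1 + log q))) := by
      gcongr
      exact (sum_le_sum_of_subset_of_nonneg Ico_subset_Icc_self fun _ _ _ => by positivity).trans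
        (sum_Icc_sqrt_gcd_div_le (NeZero.ne q) q)
  have hmain : q * ‖∑ m ∈ Icc 1 M, F m‖ ≤ A * M + B * (q * (#q.divisors * (1 + log q))) := calc
    q * ‖∑ m ∈ Icc 1 M, F m‖ = ‖𝓕 F 0 * G 0 + ∑ t ∈ Ico 1 q, 𝓕 F t * G t‖ := by
      rw [← Complex.norm_natCast, ← norm_mul, natCast_mul_sum_eq_sum_dft_mul,
        sum_range_eq_add_Ico _ (Nat.pos_of_ne_zero (NeZero.ne q)), Nat.cast_zero]
    _ ≤ ‖𝓕 F 0‖ * M + ∑ t ∈ Ico 1 q, ‖𝓕 F t * G t‖ := by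
      rw [← hG0, ← norm_mul]
      exact (norm_add_le _ _).trans (add_le_add le_rfl (norm_sum_le _ _))
    _ ≤ A * M + B * (q * (#q.divisors * (1 + log q))) := by gcongr
  rw [mul_comm, ← le_div_iff₀ hq] at hmain
  exact hmain.trans_eq (by field_simp)

lemma one_add_log_le_two_mul_log_two_mul {x : ℝ} (hx : 2 ≤ x) : 1 + log x ≤ 2 * log (2 * x) := by
  have h1 : 1 ≤ log (2 * x) := by
    rw [le_log_iff_exp_le (by positivity)]
    linarith [exp_one_lt_d9]
  have h2 : log x ≤ log (2 * x) := log_le_log (by positivity) (by linarith)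
  linarith

/-- Abstract Polya–Vinogradov completion lemma. -/
theorem stmt8 :
    ∃ C : ℝ, 0 < C ∧ ∀ (q : ℕ), 2 ≤ q → ∀ (F : ZMod q → ℂ) (A B : ℝ),
      ‖∑ u ∈ Finset.range q, F (u : ZMod q)‖ ≤ A →
      (∀ t ∈ Finset.range q, t ≠ 0 →
        ‖∑ u ∈ Finset.range q, F (u : ZMod q) * e (-((t * u : ℂ) / q))‖ ≤
          B * Real.sqrt (Nat.gcd t q)) →
      ∀ M : ℕ, 1 ≤ M →
        ‖∑ m ∈ Finset.Icc 1 M, F (m : ZMod q)‖ ≤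
          A * M / q + C * B * q.divisors.card * Real.log (2 * q) := by
  refine ⟨2, two_pos, fun q hq F A B hA hB M _ => ?_⟩
  have : NeZero q := ⟨by omega⟩
  have hdft : ∀ t ∈ Ico 1 q, ‖𝓕 F t‖ ≤ B * √(t.gcd q) := fun t ht => by
    obtain ⟨ht1, htq⟩ := mem_Ico.mp ht
    rw [dft_natCast_eq_sum_range]
    exact hB t (mem_range.mpr htq) (by omega)
  have hB0 : 0 ≤ B := by
    simpa using (norm_nonneg _).trans (hdft 1 (mem_Ico.mpr ⟨le_rfl, hq⟩))
  have hdft_zero : ‖𝓕 F 0‖ ≤ A := by rwa [dft_apply_zero, ← sum_range_eq_sum_zmod]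
  have hlog := one_add_log_le_two_mul_log_two_mul (x := q) (by exact_mod_cast hq)
  calc _ ≤ A * M / q + B * #q.divisors * (1 + log q) :=
        norm_sum_Icc_le_of_norm_dft_le q F hB0 hdft_zero hdft M
    _ ≤ A * M / q + B * #q.divisors * (2 * log (2 * q)) := by gcongr
    _ = _ := by ring
end
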